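/- arXiv:1510.05309 — 2 statements merged into one kernel-verified Lean document; each statement's English description precedes it below -/
import Mathlib

section
/- Let $n$ be a normalizer of the diagonal $D(E)$ in $A_R(G_E)$ and $d \in D(E)$. Define $\alpha_n(x) = r(\operatorname{supp}(n)x)$ for $x \in s(\operatorname{supp}(n))$, extended so that $d \circ \alpha_n$ vanishes off $s(\operatorname{supp}(n))$. Then $n^* d = (d \circ \alpha_n) n^*$ and $n^* d n = (d \circ \alpha_n)(n^* n)$ in $A_R(G_E)$. -/
open scoped Classical BigOperators

namespace LPA

structure DirGraph where
  V : Type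
  E : Type
  r : E → V
  s : E → V

structure InfPath (G : DirGraph) where
  edges : ℕ → G.E
  compat : ∀ i, G.s (edges i) = G.r (edges (i + 1))

structure FinPath (G : DirGraph) where
  len : ℕ
  vtx : G.V
  edges : ℕ → G.E
  compat : ∀ i, i + 1 < len → G.s (edges i) = G.r (edges (i + 1))
  vtx_eq : 0 < len → vtx = G.r (edges 0)

variable {G : DirGraph}

/-- The source vertex of a finite path (its `vtx` if it has length `0`). -/
def FinPath.src (μ : FinPath G) : G.V :=
  if μ.len = 0 then μ.vtx else G.s (μ.edges (μ.len - 1))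

/-- The range vertex of an infinite path. -/
def InfPath.rng (x : InfPath G) : G.V := G.r (x.edges 0)

/-- `x ∼ₖ y`: shift equivalence with lag `k`. -/
def ShiftEquiv (x : InfPath G) (k : ℤ) (y : InfPath G) : Prop :=
  ∃ a b N : ℕ, (a : ℤ) - (b : ℤ) = k ∧ ∀ i, N ≤ i → x.edges (i + a) = y.edges (i + b)

def RowFinite (G : DirGraph) : Prop := ∀ v : G.V, {e : G.E | G.r e = v}.Finite

def NoSources (G : DirGraph) : Prop := ∀ v : G.V, ∃ e : G.E, G.r e = v

/-- `x = μ z`: the infinite path `x` is the concatenation of the finite path `μ`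
with the infinite path `z`. -/
def IsConcat (μ : FinPath G) (z x : InfPath G) : Prop :=
  z.rng = μ.src ∧ ∀ i, x.edges i = if i < μ.len then μ.edges i else z.edges (i - μ.len)

/-- `ρ = μ β`: concatenation of finite paths. -/
def IsAppendF (μ β ρ : FinPath G) : Prop :=
  ρ.len = μ.len + β.len ∧ (∀ i < μ.len, ρ.edges i = μ.edges i) ∧
    (∀ i < β.len, ρ.edges (μ.len + i) = β.edges i) ∧
    ρ.vtx = if μ.len = 0 then β.vtx else μ.vtx

/-- Triples `(x, k, y)`: the ambient type of the graph groupoid. -/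
abbrev GTrip (G : DirGraph) := InfPath G × ℤ × InfPath G

def gmul (g h : GTrip G) : GTrip G := (g.1, g.2.1 + h.2.1, h.2.2)
def ginv (g : GTrip G) : GTrip G := (g.2.2, -g.2.1, g.1)
def unit (x : InfPath G) : GTrip G := (x, 0, x)

def GraphGroupoid (G : DirGraph) : Set (GTrip G) :=
  {g | ShiftEquiv g.1 g.2.1 g.2.2}

/-- `BC` for subsets of the groupoid. -/
def setMul (B C : Set (GTrip G)) : Set (GTrip G) :=
  {g | ∃ γ ∈ B, ∃ η ∈ C, γ.2.2 = η.1 ∧ g = gmul γ η}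

def setInv (B : Set (GTrip G)) : Set (GTrip G) := ginv '' B

/-- The cylinder set `Z(μ)` of infinite paths extending `μ`. -/
def Zset (μ : FinPath G) : Set (InfPath G) :=
  {x | (∀ i < μ.len, x.edges i = μ.edges i) ∧ x.rng = μ.vtx}

/-- The basic compact open bisection `Z(μ,ν) = {(μz, |μ|-|ν|, νz)}`. -/
def ZZ (μ ν : FinPath G) : Set (GTrip G) :=
  {g | ∃ z : InfPath G, IsConcat μ z g.1 ∧ IsConcat ν z g.2.2 ∧
    g.2.1 = (μ.len : ℤ) - (ν.len : ℤ)}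

instance : TopologicalSpace (InfPath G) :=
  TopologicalSpace.generateFrom {S | ∃ μ : FinPath G, S = Zset μ}

def unitSet (S : Set (InfPath G)) : Set (GTrip G) := {g | ∃ x ∈ S, g = unit x}

variable (R : Type) [CommRing R]

/-- The diagonal `D(E)` of the Steinberg algebra. -/
noncomputable def Diag (G : DirGraph) : Submodule R (GTrip G → R) :=
  Submodule.span R {f | ∃ μ : FinPath G, f = Set.indicator (unitSet (Zset μ)) 1}

/-- The Steinberg algebra `A_R(G_E)` as a set of functions on the groupoid. -/
noncomputable def Steinberg (G : DirGraph) : Submodule R (GTrip G → R) :=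
  Submodule.span R
    {f | ∃ μ ν : FinPath G, μ.src = ν.src ∧ f = Set.indicator (ZZ μ ν) 1}

variable {R}

/-- Convolution product. -/
noncomputable def conv (f g : GTrip G → R) : GTrip G → R :=
  fun γ => ∑ᶠ η ∈ {η : GTrip G | η.1 = γ.1}, f η * g (gmul (ginv η) γ)

/-- Involution `f^*(γ) = star (f (γ⁻¹))`. -/
def starf [StarRing R] (f : GTrip G → R) : GTrip G → R :=
  fun γ => star (f (ginv γ))

/-- `n` is a normalizer of the diagonal. -/
def IsNormalizer [StarRing R] (n : GTrip G → R) : Prop :=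
  n ∈ Steinberg R G ∧ ∀ d ∈ Diag R G,
    conv (conv n d) (starf n) ∈ Diag R G ∧ conv (conv (starf n) d) n ∈ Diag R G

/-- `α_n(x) = r(supp(n) x)` (given by a choice; unique for normalizers). -/
noncomputable def alphaFun (n : GTrip G → R) (x : InfPath G) : InfPath G :=
  if h : ∃ g : GTrip G, n g ≠ 0 ∧ g.2.2 = x then h.choose.1 else x

/-- `dom(n) = supp(n^* n)`, as a subset of the infinite path space. -/
noncomputable def domSet [StarRing R] (n : GTrip G → R) : Set (InfPath G) :=
  {x | conv (starf n) n (unit x) ≠ 0}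

/-- `ran(n) = supp(n n^*)`, as a subset of the infinite path space. -/
noncomputable def ranSet [StarRing R] (n : GTrip G → R) : Set (InfPath G) :=
  {x | conv n (starf n) (unit x) ≠ 0}

/-- `d ∘ α_n`, viewed as a function on the groupoid vanishing off `s(supp n)`. -/
noncomputable def dAlpha (d n : GTrip G → R) : GTrip G → R := fun g =>
  if (g.2.1 = 0 ∧ g.1 = g.2.2 ∧ ∃ h : GTrip G, n h ≠ 0 ∧ h.2.2 = g.2.2)
  then d (unit (alphaFun n g.2.2)) else 0

/-- `p_x`, the characteristic function of the unit `{x}`. -/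
noncomputable def ppt (R : Type) [CommRing R] (x : InfPath G) : GTrip G → R :=
  Set.indicator {unit x} 1

/-- `f` is homogeneous of degree `k`. -/
def Homog (k : ℤ) (f : GTrip G → R) : Prop := ∀ g : GTrip G, f g ≠ 0 → g.2.1 = k

def IsCycle (η : FinPath G) : Prop :=
  0 < η.len ∧ η.src = η.vtx ∧
    ∀ i j, 0 < i → i + 1 < η.len → 0 < j → j + 1 < η.len → i ≠ j →
      G.s (η.edges i) ≠ G.r (η.edges j)

def HasEntrance (η : FinPath G) : Prop :=
  ∃ (e : G.E) (i : ℕ), i < η.len ∧ G.r e = G.r (η.edges i) ∧ e ≠ η.edges i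

/-- `z = η η η ⋯`. -/
def IsPeriodicOf (η : FinPath G) (z : InfPath G) : Prop :=
  ∀ i, z.edges i = η.edges (i % η.len)

end LPA

/-!
Write `n^*(γ) = star (n γ⁻¹)`. Since `d` and `d ∘ α_n` live on the unit space, `(n^* d)(γ)` and
`((d ∘ α_n) n^*)(γ)` equal `n^*(γ) d(s γ)` and `d(α_n(r γ)) n^*(γ)`; so the first identity says
that `α_n` maps the source of any arrow in `supp n` to its range, i.e. that two arrows of `supp n`
with a common source `x` have a common range. If `(y, k, x)` and `(y', k', x)` were in `supp n`
with `y ≠ y'`, choose a cylinder `Z` around `x` containing no other source of an arrow of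
`supp n` with range `y` (there are finitely many of those). Then
`(n 1_Z n^*)(y, m, y') = ∑ₖ n(y, k, x) star n(y', k - m, x)`, which for suitable `m` is the
product of two nonzero coefficients, contradicting `n 1_Z n^* ∈ D(E)`. The second identity
follows from the first: left convolution by a function on the unit space is pointwise
multiplication, hence associates with convolution over a domain.
-/

namespace LPA

open Function Set

variable {G : DirGraph}

theorem InfPath.ext_edges {x y : InfPath G} (h : x.edges = y.edges) : x = y := by
  cases x; cases y; cases h; rfl

theorem IsConcat.tail_unique {μ : FinPath G} {z w x : InfPath G}
    (hz : IsConcat μ z x) (hw : IsConcat μ w x) : z = w := by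
  refine InfPath.ext_edges (funext fun j => ?_)
  have hzj := hz.2 (j + μ.len)
  have hwj := hw.2 (j + μ.len)
  rw [if_neg (by omega), Nat.add_sub_cancel] at hzj hwj
  rw [← hzj, ← hwj]

theorem IsConcat.unique {μ : FinPath G} {z x x' : InfPath G}
    (hx : IsConcat μ z x) (hx' : IsConcat μ z x') : x = x' :=
  InfPath.ext_edges (funext fun i => by rw [hx.2 i, hx'.2 i])

theorem ZZ.eq_of_fst_eq {μ ν : FinPath G} {g h : GTrip G}
    (hg : g ∈ ZZ μ ν) (hh : h ∈ ZZ μ ν) (h1 : g.1 = h.1) : g = h := by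
  obtain ⟨z, hz1, hz2, hz3⟩ := hg
  obtain ⟨w, hw1, hw2, hw3⟩ := hh
  obtain rfl : z = w := (h1 ▸ hz1).tail_unique hw1
  exact Prod.ext h1 (Prod.ext (hz3.trans hw3.symm) (hz2.unique hw2))

def InfPath.prefix (x : InfPath G) (L : ℕ) : FinPath G :=
  ⟨L, x.rng, x.edges, fun i _ => x.compat i, fun _ => rfl⟩

theorem InfPath.mem_Zset_prefix (x : InfPath G) (L : ℕ) : x ∈ Zset (x.prefix L) :=
  ⟨fun _ _ => rfl, rfl⟩

theorem InfPath.exists_inter_Zset_prefix_subset (x : InfPath G) {S : Set (InfPath G)}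
    (hS : S.Finite) : ∃ L, S ∩ Zset (x.prefix L) ⊆ {x} := by
  have hsep : ∀ z ∈ S, ∀ᶠ L in Filter.atTop, z ∈ Zset (x.prefix L) → z = x := by
    intro z _
    by_cases hzx : z = x
    · exact Filter.Eventually.of_forall fun _ _ => hzx
    obtain ⟨i, hi⟩ : ∃ i, z.edges i ≠ x.edges i := by
      by_contra! h
      exact hzx (InfPath.ext_edges (funext h))
    filter_upwards [Filter.eventually_gt_atTop i] with L hL hzL
    exact absurd (hzL.1 i hL) hi
  obtain ⟨L, hL⟩ := ((Filter.eventually_all_finite hS).2 hsep).exists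
  exact ⟨L, fun z hz => hL z hz.1 hz.2⟩

theorem support_of_mem_span {α R : Type*} [Semiring R] {S : Set (α → R)} {P : Set α → Prop}
    (hempty : P ∅) (hmono : ∀ ⦃s t⦄, s ⊆ t → P t → P s)
    (hunion : ∀ ⦃s t⦄, P s → P t → P (s ∪ t)) (hS : ∀ f ∈ S, P (support f))
    {f : α → R} (hf : f ∈ Submodule.span R S) : P (support f) := by
  induction hf using Submodule.span_induction with
  | mem f hf => exact hS f hf
  | zero => rwa [support_zero]
  | add f g _ _ hf hg => exact hmono (support_add f g) (hunion hf hg)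
  | smul r f _ hf => exact hmono (support_const_smul_subset r f) hf

theorem mem_range_unit {g : GTrip G} : g ∈ range unit ↔ g.2.1 = 0 ∧ g.1 = g.2.2 := by
  constructor
  · rintro ⟨x, rfl⟩
    exact ⟨rfl, rfl⟩
  · rintro ⟨h0, h1⟩
    exact ⟨g.2.2, Prod.ext h1.symm (Prod.ext h0.symm rfl)⟩

variable {R : Type} [CommRing R]

theorem support_subset_range_unit_of_mem_Diag {d : GTrip G → R} (hd : d ∈ Diag R G) :
    support d ⊆ range unit := by
  refine support_of_mem_span (P := (· ⊆ range unit)) (empty_subset _)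
    (fun _ _ => subset_trans) (fun _ _ => union_subset) ?_ hd
  rintro f ⟨μ, rfl⟩
  refine support_indicator_subset.trans ?_
  rintro _ ⟨x, -, rfl⟩
  exact ⟨x, rfl⟩

theorem finite_support_inter_fst_of_mem_Steinberg {n : GTrip G → R} (hn : n ∈ Steinberg R G)
    (y : InfPath G) : (support n ∩ {g | g.1 = y}).Finite := by
  refine support_of_mem_span (P := fun s => (s ∩ {g : GTrip G | g.1 = y}).Finite) (by simp)
    (fun _ _ hst ht => ht.subset (inter_subset_inter_left _ hst))
    (fun _ _ hs ht => union_inter_distrib_right .. ▸ hs.union ht) ?_ hn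
  rintro f ⟨μ, ν, -, rfl⟩
  exact Subsingleton.finite fun g hg h hh => ZZ.eq_of_fst_eq
    (support_indicator_subset hg.1) (support_indicator_subset hh.1) (hg.2.trans hh.2.symm)

theorem finite_support_slice_of_mem_Steinberg {n : GTrip G → R} (hn : n ∈ Steinberg R G)
    (y x : InfPath G) : (support fun k : ℤ => n (y, k, x)).Finite :=
  ((finite_support_inter_fst_of_mem_Steinberg hn y).preimage
    (f := fun k : ℤ => ((y, k, x) : GTrip G)) fun _ _ _ _ h => congrArg (·.2.1) h).subset
    fun _ hk => ⟨hk, rfl⟩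

theorem conv_apply_of_support_subset_right {f d : GTrip G → R} (hd : support d ⊆ range unit)
    (γ : GTrip G) : conv f d γ = f γ * d (unit γ.2.2) := by
  rw [conv, finsum_mem_inter_support_eq' _ _ {γ}, finsum_mem_singleton]
  · congr 2
    exact Prod.ext rfl (Prod.ext (neg_add_cancel γ.2.1) rfl)
  intro η hη
  refine ⟨fun h1 => ?_, fun h => h ▸ rfl⟩
  obtain ⟨hk, h2⟩ := mem_range_unit.1 (hd (right_ne_zero_of_mul hη))
  exact Prod.ext h1 (Prod.ext (neg_add_eq_zero.1 hk) h2)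

theorem conv_apply_of_support_subset_left {u f : GTrip G → R} (hu : support u ⊆ range unit)
    (γ : GTrip G) : conv u f γ = u (unit γ.1) * f γ := by
  rw [conv, finsum_mem_inter_support_eq' _ _ {unit γ.1}, finsum_mem_singleton]
  · congr 2
    exact Prod.ext rfl (Prod.ext (by simp [unit, gmul, ginv]) rfl)
  intro η hη
  refine ⟨fun h1 => ?_, fun h => h ▸ rfl⟩
  obtain ⟨hk, h2⟩ := mem_range_unit.1 (hu (left_ne_zero_of_mul hη))
  exact Prod.ext h1 (Prod.ext hk (h2.symm.trans h1))

theorem conv_conv_of_support_subset_left [NoZeroDivisors R] {u : GTrip G → R}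
    (hu : support u ⊆ range unit) (f g : GTrip G → R) :
    conv (conv u f) g = conv u (conv f g) := by
  funext γ
  calc conv (conv u f) g γ
      = ∑ᶠ η ∈ {η : GTrip G | η.1 = γ.1}, u (unit γ.1) * (f η * g (gmul (ginv η) γ)) :=
        finsum_mem_congr rfl fun η hη => by
          rw [conv_apply_of_support_subset_left hu, show η.1 = γ.1 from hη, mul_assoc]
    _ = conv u (conv f g) γ := by
        rw [← mul_finsum_mem, conv_apply_of_support_subset_left hu]; rfl

theorem conv_apply_eq_finsum_of_fiber {f g : GTrip G → R} {y x : InfPath G}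
    (hf : ∀ h ∈ support f, h.1 = y → h.2.2 = x) (m : ℤ) (y' : InfPath G) :
    conv f g (y, m, y') = ∑ᶠ k : ℤ, f (y, k, x) * g (x, m - k, y') := by
  rw [conv, finsum_mem_inter_support_eq' _ _ (range fun k : ℤ => ((y, k, x) : GTrip G)),
    finsum_mem_range fun _ _ h => congrArg (·.2.1) h]
  · simp only [gmul, ginv, neg_add_eq_sub]
  intro η hη
  refine ⟨fun hy => ⟨η.2.1, ?_⟩, by rintro ⟨k, rfl⟩; rfl⟩
  exact Prod.ext hy.symm (Prod.ext rfl (hf η (left_ne_zero_of_mul hη) hy).symm)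

theorem exists_finsum_mul_sub_ne_zero {S : Type*} [Semiring S] [NoZeroDivisors S]
    {a b : ℤ → S} (ha : (support a).Finite) (hb : (support b).Finite) (ha0 : a ≠ 0)
    (hb0 : b ≠ 0) : ∃ m : ℤ, ∑ᶠ k, a k * b (k - m) ≠ 0 := by
  obtain ⟨K, hK, hKmax⟩ := exists_max_image _ id ha (support_nonempty_iff.2 ha0)
  obtain ⟨J, hJ, hJmin⟩ := exists_min_image _ id hb (support_nonempty_iff.2 hb0)
  refine ⟨K - J, ?_⟩
  rw [finsum_eq_single _ K, sub_sub_cancel]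
  · exact mul_ne_zero hK hJ
  intro k hk
  by_cases hak : a k = 0
  · rw [hak, zero_mul]
  have hkK : k < K := lt_of_le_of_ne (hKmax k hak) hk
  by_contra hne
  have := hJmin _ (right_ne_zero_of_mul hne)
  simp only [id] at this
  omega

theorem support_dAlpha_subset (d n : GTrip G → R) : support (dAlpha d n) ⊆ range unit := by
  intro g hg
  rw [mem_support, dAlpha] at hg
  split_ifs at hg with h
  · exact mem_range_unit.2 ⟨h.1, h.2.1⟩
  · exact absurd rfl hg

section Normalizer

variable [StarRing R] [NoZeroDivisors R]

theorem IsNormalizer.fst_eq_of_snd_eq {n : GTrip G → R} (hn : IsNormalizer n)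
    {g g' : GTrip G} (hg : n g ≠ 0) (hg' : n g' ≠ 0) (h : g.2.2 = g'.2.2) : g.1 = g'.1 := by
  obtain ⟨y, k, x⟩ := g
  obtain ⟨y', k', x'⟩ := g'
  obtain rfl : x = x' := h
  change y = y'
  obtain ⟨L, hL⟩ := x.exists_inter_Zset_prefix_subset
    ((finite_support_inter_fst_of_mem_Steinberg hn.1 y).image (·.2.2))
  set D : GTrip G → R := (unitSet (Zset (x.prefix L))).indicator 1
  have hD : D ∈ Diag R G := Submodule.subset_span ⟨_, rfl⟩
  have hnD := conv_apply_of_support_subset_right (f := n)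
    (support_subset_range_unit_of_mem_Diag hD)
  have hfiber : ∀ h ∈ support (conv n D), h.1 = y → h.2.2 = x := by
    intro h hh hy
    rw [mem_support, hnD] at hh
    obtain ⟨z, hz, hzh⟩ := support_indicator_subset (right_ne_zero_of_mul hh)
    obtain rfl : h.2.2 = z := congrArg Prod.fst hzh
    exact hL (mem_inter (mem_image_of_mem _ ⟨left_ne_zero_of_mul hh, hy⟩) hz)
  have hDx : D (unit x) = 1 :=
    indicator_of_mem (s := unitSet (Zset (x.prefix L))) ⟨x, x.mem_Zset_prefix L, rfl⟩ _
  obtain ⟨m, hm⟩ := exists_finsum_mul_sub_ne_zero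
    (a := fun k => n (y, k, x)) (b := fun k => star (n (y', k, x)))
    (finite_support_slice_of_mem_Steinberg hn.1 y x)
    (by simpa only [support, ne_eq, star_eq_zero] using
      finite_support_slice_of_mem_Steinberg hn.1 y' x)
    (fun h0 => hg (congrFun h0 k)) (fun h0 => hg' (star_eq_zero.1 (congrFun h0 k')))
  have hm' : ((y, m, y') : GTrip G) ∈ support (conv (conv n D) (starf n)) := by
    rw [mem_support, conv_apply_eq_finsum_of_fiber hfiber]
    simpa only [hnD, hDx, mul_one, starf, ginv, neg_sub] using hm
  exact (mem_range_unit.1 (support_subset_range_unit_of_mem_Diag (hn.2 D hD).1 hm')).2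

theorem IsNormalizer.alphaFun_snd {n : GTrip G → R} (hn : IsNormalizer n)
    {h : GTrip G} (hh : n h ≠ 0) : alphaFun n h.2.2 = h.1 := by
  have hex : ∃ g : GTrip G, n g ≠ 0 ∧ g.2.2 = h.2.2 := ⟨h, hh, rfl⟩
  rw [alphaFun, dif_pos hex]
  exact hn.fst_eq_of_snd_eq hex.choose_spec.1 hh hex.choose_spec.2

theorem IsNormalizer.dAlpha_unit_snd {n : GTrip G → R} (hn : IsNormalizer n)
    (d : GTrip G → R) {h : GTrip G} (hh : n h ≠ 0) : dAlpha d n (unit h.2.2) = d (unit h.1) := by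
  rw [dAlpha, if_pos ⟨rfl, rfl, h, hh, rfl⟩]
  exact congrArg (d ∘ unit) (hn.alphaFun_snd hh)

end Normalizer

end LPA

open LPA in
theorem star_mul_diag_general {G : DirGraph}
    {R : Type} [CommRing R] [IsDomain R] [StarRing R]
    (n : GTrip G → R) (hn : IsNormalizer n) (d : GTrip G → R) (hd : d ∈ Diag R G) :
    conv (starf n) d = conv (dAlpha d n) (starf n) ∧
      conv (conv (starf n) d) n = conv (dAlpha d n) (conv (starf n) n) := by
  have hdα := support_dAlpha_subset d n
  have hstar : conv (starf n) d = conv (dAlpha d n) (starf n) := by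
    funext γ
    rw [conv_apply_of_support_subset_right (support_subset_range_unit_of_mem_Diag hd),
      conv_apply_of_support_subset_left hdα]
    by_cases h0 : n (ginv γ) = 0
    · simp [starf, h0]
    · have hα : dAlpha d n (unit γ.1) = d (unit γ.2.2) := hn.dAlpha_unit_snd d h0
      rw [hα, mul_comm]
  exact ⟨hstar, by rw [hstar, conv_conv_of_support_subset_left hdα]⟩

open LPA in
/-- `n^* d = (d ∘ α_n) n^*` and `n^* d n = (d ∘ α_n)(n^* n)`. -/
theorem star_mul_diag {G : DirGraph} (hrf : RowFinite G) (hns : NoSources G)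
    {R : Type} [CommRing R] [IsDomain R] [StarRing R]
    (n : GTrip G → R) (hn : IsNormalizer n) (d : GTrip G → R) (hd : d ∈ Diag R G) :
    conv (starf n) d = conv (dAlpha d n) (starf n) ∧
      conv (conv (starf n) d) n = conv (dAlpha d n) (conv (starf n) n) :=
  star_mul_diag_general n hn d hd
end

section
/- Let $m, n$ be normalizers of $D(E)$ in $A_R(G_E)$ over an integral domain $R$. Then an infinite path $x$ lies in $\operatorname{dom}(mn)$ if and only if $x \in \operatorname{dom}(n)$ and $\alpha_n(x) \in \operatorname{dom}(m)$; in that case $\alpha_m(\alpha_n(x)) = \alpha_{mn}(x)$. -/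
open scoped Classical BigOperators

/-! For a normalizer `n`, all arrows of `supp n` with source `x` have the same range `α_n x`:
otherwise, for a cylinder `d` small enough around `x`, the element `n d n^*` of the diagonal
would take at `(y₁, t, y₂)` the value of a cross-correlation of two nonzero finitely supported
sequences, which is nonzero for a suitable lag `t`. Hence along the source fibre of `x` the
normalizer `n` is a finitely supported sequence `N k = n (α_n x, k, x)`, likewise `m` is a
sequence `M` along the fibre of `α_n x`, and `mn` is the convolution `M ⋆ N`, with range
`α_m (α_n x)`. As `n^* d n` is diagonal for `d = 1` near `α_n x`, the sequence `N` is orthogonal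
to its nonzero shifts, so `‖M ⋆ N‖² = ‖M‖² ‖N‖²`, that is
`(mn)^*(mn)(x) = m^*m(α_n x) · n^*n(x)`; over a domain this vanishes iff a factor does. -/

open Function
open scoped Pointwise

section Sequences

variable {ι R : Type*} [AddCommGroup ι]

theorem sum_star_convolution_mul_self [DecidableEq ι] [CommSemiring R] [StarRing R]
    (M N : ι → R) (J K : Finset ι) (hN : support N ⊆ K)
    (horth : ∀ s ≠ 0, ∑ k ∈ K, star (N k) * N (k + s) = 0) :
    ∑ t ∈ J + K, star (∑ j ∈ J, M j * N (t - j)) * ∑ j ∈ J, M j * N (t - j) =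
      (∑ j ∈ J, star (M j) * M j) * ∑ k ∈ K, star (N k) * N k := by
  have hshift : ∀ j ∈ J, ∀ j', ∑ t ∈ J + K, star (N (t - j)) * N (t - j') =
      ∑ k ∈ K, star (N k) * N (k + (j - j')) := by
    intro j hj j'
    have hsub : K.image (j + ·) ⊆ J + K := by
      intro t ht
      obtain ⟨k, hk, rfl⟩ := Finset.mem_image.1 ht
      exact Finset.add_mem_add hj hk
    rw [← Finset.sum_subset hsub, Finset.sum_image (add_right_injective j).injOn]
    · refine Finset.sum_congr rfl fun k _ => ?_
      rw [add_sub_cancel_left, add_comm j k, add_sub_assoc]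
    · intro t _ ht
      have : N (t - j) = 0 := by
        by_contra h
        exact ht (Finset.mem_image.2 ⟨t - j, hN h, add_sub_cancel j t⟩)
      rw [this, star_zero, zero_mul]
  calc ∑ t ∈ J + K, star (∑ j ∈ J, M j * N (t - j)) * ∑ j ∈ J, M j * N (t - j)
      = ∑ t ∈ J + K, ∑ j ∈ J, ∑ j' ∈ J,
          star (M j) * M j' * (star (N (t - j)) * N (t - j')) := by
        refine Finset.sum_congr rfl fun t _ => ?_
        simp only [star_sum, star_mul', Finset.sum_mul_sum]
        refine Finset.sum_congr rfl fun j _ => Finset.sum_congr rfl fun j' _ => ?_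
        ring
    _ = ∑ j ∈ J, ∑ j' ∈ J,
          star (M j) * M j' * ∑ k ∈ K, star (N k) * N (k + (j - j')) := by
        rw [Finset.sum_comm]
        refine Finset.sum_congr rfl fun j hj => ?_
        rw [Finset.sum_comm]
        simp only [← Finset.mul_sum, hshift j hj]
    _ = ∑ j ∈ J, star (M j) * M j * ∑ k ∈ K, star (N k) * N k := by
        refine Finset.sum_congr rfl fun j hj => ?_
        rw [Finset.sum_eq_single j (fun j' _ hj' => ?_) (absurd hj), sub_self]
        · simp only [add_zero]
        · rw [horth _ (sub_ne_zero.2 hj'.symm), mul_zero]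
    _ = _ := (Finset.sum_mul ..).symm

theorem exists_sum_mul_sub_ne_zero [LinearOrder ι] [IsOrderedAddMonoid ι]
    [Semiring R] [NoZeroDivisors R] (A B : ι → R) (K L : Finset ι)
    (hA : support A ⊆ K) (hB : support B ⊆ L) (hA0 : A ≠ 0) (hB0 : B ≠ 0) :
    ∃ t, ∑ k ∈ K, A k * B (k - t) ≠ 0 := by
  classical
  obtain ⟨a, ha⟩ := Function.ne_iff.1 hA0
  obtain ⟨b, hb⟩ := Function.ne_iff.1 hB0
  set kmax := (K.filter (A · ≠ 0)).max' ⟨a, Finset.mem_filter.2 ⟨hA ha, ha⟩⟩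
  set lmin := (L.filter (B · ≠ 0)).min' ⟨b, Finset.mem_filter.2 ⟨hB hb, hb⟩⟩
  have hkmax := Finset.mem_filter.1 (Finset.max'_mem _ _ : kmax ∈ _)
  have hlmin := Finset.mem_filter.1 (Finset.min'_mem _ _ : lmin ∈ _)
  refine ⟨kmax - lmin, ?_⟩
  rw [Finset.sum_eq_single_of_mem kmax hkmax.1 fun k hk hne => ?_, sub_sub_cancel]
  · exact mul_ne_zero hkmax.2 hlmin.2
  by_contra h
  obtain ⟨hAk, hBk⟩ := mul_ne_zero_iff.1 h
  have h1 : k ≤ kmax := Finset.le_max' _ _ (Finset.mem_filter.2 ⟨hk, hAk⟩)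
  have h2 : lmin ≤ k - (kmax - lmin) := Finset.min'_le _ _ (Finset.mem_filter.2 ⟨hB hBk, hBk⟩)
  rw [sub_sub_eq_add_sub, le_sub_iff_add_le, add_comm lmin, add_le_add_iff_right] at h2
  exact hne (le_antisymm h1 h2)

end Sequences

namespace LPA

variable {G : DirGraph}

attribute [ext] InfPath

def InfPath.take (x : InfPath G) (L : ℕ) : FinPath G :=
  ⟨L, x.rng, x.edges, fun i _ => x.compat i, fun _ => rfl⟩

theorem InfPath.mem_Zset_take (x : InfPath G) (L : ℕ) : x ∈ Zset (x.take L) :=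
  ⟨fun _ _ => rfl, rfl⟩

theorem InfPath.exists_take_isolating (x : InfPath G) {S : Set (InfPath G)} (hS : S.Finite) :
    ∃ L, ∀ w ∈ S, w ∈ Zset (x.take L) → w = x := by
  have hw : ∀ w, ∀ᶠ L in Filter.atTop, w ∈ Zset (x.take L) → w = x := by
    intro w
    by_cases hwx : w = x
    · exact .of_forall fun _ _ => hwx
    obtain ⟨i, hi⟩ : ∃ i, w.edges i ≠ x.edges i := by
      by_contra! h
      exact hwx (InfPath.ext (funext h))
    filter_upwards [Filter.eventually_gt_atTop i] with L hL hwL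
    exact absurd (hwL.1 i hL) hi
  exact ((Filter.eventually_all_finite hS).2 fun w _ => hw w).exists

section Concat

variable {μ : FinPath G} {z z' x x' : InfPath G}

theorem IsConcat.tail_edges (h : IsConcat μ z x) (i : ℕ) : z.edges i = x.edges (μ.len + i) := by
  simp [h.2]

theorem IsConcat.tail_unique_s8 (h : IsConcat μ z x) (h' : IsConcat μ z' x) : z = z' :=
  InfPath.ext (funext fun i => by rw [h.tail_edges, h'.tail_edges])

theorem IsConcat.right_unique (h : IsConcat μ z x) (h' : IsConcat μ z x') : x = x' :=
  InfPath.ext (funext fun i => by rw [h.2, h'.2])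

end Concat

theorem injOn_fst_ZZ (μ ν : FinPath G) : Set.InjOn Prod.fst (ZZ μ ν) := by
  rintro ⟨y, k, x⟩ ⟨z, hy, hx, hk⟩ ⟨y', k', x'⟩ ⟨z', hy', hx', hk'⟩ (rfl : y = y')
  obtain rfl := hy.tail_unique_s8 hy'
  obtain rfl := hx.right_unique hx'
  simp_all

theorem injOn_snd_snd_ZZ (μ ν : FinPath G) : Set.InjOn (fun g : GTrip G => g.2.2) (ZZ μ ν) := by
  rintro ⟨y, k, x⟩ ⟨z, hy, hx, hk⟩ ⟨y', k', x'⟩ ⟨z', hy', hx', hk'⟩ (rfl : x = x')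
  obtain rfl := hx.tail_unique_s8 hx'
  obtain rfl := hy.right_unique hy'
  simp_all

theorem unit_mem_unitSet {S : Set (InfPath G)} {x : InfPath G} : unit x ∈ unitSet S ↔ x ∈ S :=
  ⟨fun ⟨_, hw, h⟩ => by rwa [show x = _ from congrArg Prod.fst h],
    fun hx => ⟨x, hx, rfl⟩⟩

section Groupoid

variable {R : Type} [CommRing R]

theorem exists_mem_Diag_indicator_Zset (μ : FinPath G) :
    ∃ d ∈ Diag R G, ∀ w, d (unit w) = (Zset μ).indicator 1 w :=
  ⟨_, Submodule.subset_span ⟨μ, rfl⟩, fun w => by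
    by_cases hw : w ∈ Zset μ <;> simp [Set.indicator, unit_mem_unitSet, hw]⟩

theorem eq_unit_of_mem_Diag {f : GTrip G → R} (hf : f ∈ Diag R G) {g : GTrip G}
    (hg : f g ≠ 0) : g = unit g.1 := by
  contrapose! hg
  induction hf using Submodule.span_induction with
  | mem f hf =>
    obtain ⟨μ, rfl⟩ := hf
    exact Set.indicator_of_notMem (by rintro ⟨x, -, rfl⟩; exact hg rfl) _
  | zero => rfl
  | add f f' _ _ h h' => simp [h, h']
  | smul c f _ h => simp [h]

theorem finite_support_inter_preimage_of_mem_Steinberg {f : GTrip G → R}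
    (hf : f ∈ Steinberg R G) {p : GTrip G → InfPath G} (hp : ∀ μ ν, Set.InjOn p (ZZ μ ν))
    (w : InfPath G) : (support f ∩ p ⁻¹' {w}).Finite := by
  induction hf using Submodule.span_induction with
  | mem f hf =>
    obtain ⟨μ, ν, -, rfl⟩ := hf
    refine Set.Subsingleton.finite fun g hg g' hg' => hp μ ν ?_ ?_ (hg.2.trans hg'.2.symm)
    · exact Set.mem_of_indicator_ne_zero hg.1
    · exact Set.mem_of_indicator_ne_zero hg'.1
  | zero => simp
  | add f f' _ _ h h' =>
    refine (h.union h').subset ?_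
    rw [← Set.union_inter_distrib_right]
    exact Set.inter_subset_inter_left _ (support_add f f')
  | smul c f _ h => exact h.subset (Set.inter_subset_inter_left _ (support_const_smul_subset c f))

theorem exists_finset_support_coeff_of_mem_Steinberg {f : GTrip G → R}
    (hf : f ∈ Steinberg R G) (y x : InfPath G) :
    ∃ K : Finset ℤ, (support fun k : ℤ => f (y, k, x)) ⊆ K := by
  have hinj : Injective fun k : ℤ => ((y, k, x) : GTrip G) :=
    fun k k' h => congrArg (fun g : GTrip G => g.2.1) h
  have hfin := ((finite_support_inter_preimage_of_mem_Steinberg hf injOn_snd_snd_ZZ x).preimage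
    hinj.injOn).subset fun k hk => ⟨hk, rfl⟩
  exact ⟨hfin.toFinset, hfin.coe_toFinset.ge⟩

theorem conv_eq_zero_of_forall {f g : GTrip G → R} {γ : GTrip G}
    (h : ∀ η : GTrip G, η.1 = γ.1 → f η = 0 ∨ g (gmul (ginv η) γ) = 0) :
    conv f g γ = 0 :=
  finsum_mem_of_eqOn_zero fun η hη => by rcases h η hη with h | h <;> simp [h]

theorem conv_apply_eq_sum {f g : GTrip G → R} {z y x : InfPath G} {t : ℤ} (J : Finset ℤ)
    (h : ∀ y' k, f (z, k, y') ≠ 0 → g (y', t - k, x) ≠ 0 → y' = y ∧ k ∈ J) :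
    conv f g (z, t, x) = ∑ j ∈ J, f (z, j, y) * g (y, t - j, x) := by
  have hinj : Injective fun j : ℤ => ((z, j, y) : GTrip G) :=
    fun j j' h => congrArg (fun g : GTrip G => g.2.1) h
  rw [conv, finsum_mem_eq_sum_of_subset _ (t := J.image fun j => (z, j, y)),
    Finset.sum_image hinj.injOn]
  · simp only [gmul, ginv, neg_add_eq_sub]
  · rintro ⟨z', k, y'⟩ ⟨rfl : z' = z, hη⟩
    simp only [gmul, ginv, neg_add_eq_sub] at hη
    obtain ⟨rfl, hk⟩ := h y' k (left_ne_zero_of_mul hη) (right_ne_zero_of_mul hη)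
    exact Finset.mem_image_of_mem _ hk
  · intro η hη
    obtain ⟨j, -, rfl⟩ := Finset.mem_image.1 hη
    rfl

theorem conv_apply_of_mem_Diag (f : GTrip G → R) {d : GTrip G → R} (hd : d ∈ Diag R G)
    (z x : InfPath G) (t : ℤ) : conv f d (z, t, x) = f (z, t, x) * d (unit x) := by
  rw [conv_apply_eq_sum {t} fun y' k _ hd' => ?_, Finset.sum_singleton, sub_self]
  · rfl
  have hunit := eq_unit_of_mem_Diag hd hd'
  simp only [unit, Prod.mk.injEq, sub_eq_zero, true_and] at hunit
  exact ⟨hunit.2.symm, Finset.mem_singleton.2 hunit.1.symm⟩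

/-- `SuppMapsTo f x y` is the paper's `r(supp(f) x) ⊆ {y}`. -/
def SuppMapsTo (f : GTrip G → R) (x y : InfPath G) : Prop :=
  ∀ y' k, f (y', k, x) ≠ 0 → y' = y

theorem conv_apply_of_suppMapsTo {f g : GTrip G → R} {z y x : InfPath G} (hg : SuppMapsTo g x y)
    {J : Finset ℤ} (hJ : (support fun j => f (z, j, y)) ⊆ J) (t : ℤ) :
    conv f g (z, t, x) = ∑ j ∈ J, f (z, j, y) * g (y, t - j, x) :=
  conv_apply_eq_sum J fun y' _ hf hg' => by
    obtain rfl := hg _ _ hg'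
    exact ⟨rfl, hJ hf⟩

theorem support_conv_subset_add {m n : GTrip G → R} {x y z : InfPath G} (hn : SuppMapsTo n x y)
    {J K : Finset ℤ} (hJ : (support fun j => m (z, j, y)) ⊆ J)
    (hK : (support fun k => n (y, k, x)) ⊆ K) :
    (support fun t => conv m n (z, t, x)) ⊆ ↑(J + K) :=
  fun t ht => by
    rw [mem_support, conv_apply_of_suppMapsTo hn hJ] at ht
    obtain ⟨j, hj, hne⟩ := Finset.exists_ne_zero_of_sum_ne_zero ht
    exact Finset.mem_add.2 ⟨j, hj, t - j, hK (right_ne_zero_of_mul hne), add_sub_cancel j t⟩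

theorem SuppMapsTo.conv {m n : GTrip G → R} {x y z : InfPath G} (hm : SuppMapsTo m y z)
    (hn : SuppMapsTo n x y) : SuppMapsTo (conv m n) x z := by
  intro z' t hc
  by_contra hz
  refine hc (conv_eq_zero_of_forall fun ⟨z'', k, y'⟩ hz'' => ?_)
  obtain rfl : z'' = z' := hz''
  by_contra! h
  obtain rfl : y' = y := hn y' (-k + t) h.2
  exact hz (hm _ _ h.1)

theorem exists_apply_alphaFun_ne_zero {f : GTrip G → R} {x : InfPath G}
    (hx : ∃ g : GTrip G, f g ≠ 0 ∧ g.2.2 = x) : ∃ k, f (alphaFun f x, k, x) ≠ 0 := by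
  rw [alphaFun, dif_pos hx]
  obtain ⟨hne, hsrc⟩ := hx.choose_spec
  generalize hx.choose = c at hne hsrc ⊢
  obtain ⟨y, k, x'⟩ := c
  obtain rfl : x' = x := hsrc
  exact ⟨k, hne⟩

theorem alphaFun_eq_of_suppMapsTo {f : GTrip G → R} {x y : InfPath G} (hf : SuppMapsTo f x y)
    (hx : ∃ g : GTrip G, f g ≠ 0 ∧ g.2.2 = x) : alphaFun f x = y :=
  have ⟨_, h⟩ := exists_apply_alphaFun_ne_zero hx
  hf _ _ h

variable [StarRing R]

theorem conv_starf_self_apply {f : GTrip G → R} {x y : InfPath G} (hf : SuppMapsTo f x y)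
    {K : Finset ℤ} (hK : (support fun k => f (y, k, x)) ⊆ K) (s : ℤ) :
    conv (starf f) f (x, s, x) = ∑ k ∈ K, star (f (y, k, x)) * f (y, k + s, x) := by
  rw [conv_apply_of_suppMapsTo hf (J := -K), Finset.sum_neg_index]
  · simp only [starf, ginv, neg_neg, sub_neg_eq_add, add_comm s]
  · exact fun j hj => Finset.mem_neg'.2 (hK (by simpa [starf, ginv] using hj))

theorem conv_starf_self_unit {f : GTrip G → R} {x y : InfPath G} (hf : SuppMapsTo f x y)
    {K : Finset ℤ} (hK : (support fun k => f (y, k, x)) ⊆ K) :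
    conv (starf f) f (unit x) = ∑ k ∈ K, star (f (y, k, x)) * f (y, k, x) := by
  simpa [unit] using conv_starf_self_apply hf hK 0

theorem exists_of_mem_domSet {f : GTrip G → R} {x : InfPath G} (hx : x ∈ domSet f) :
    ∃ g : GTrip G, f g ≠ 0 ∧ g.2.2 = x := by
  by_contra! h
  refine hx (conv_eq_zero_of_forall fun η hη => .inl ?_)
  simpa [starf] using not_imp_not.1 (h (ginv η)) hη

end Groupoid

section Normalizer

variable {R : Type} [CommRing R] [NoZeroDivisors R] [StarRing R] {n : GTrip G → R}

theorem IsNormalizer.fst_eq_of_snd_eq_s8 (hn : IsNormalizer n) {y₁ y₂ x : InfPath G}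
    {k₁ k₂ : ℤ} (h₁ : n (y₁, k₁, x) ≠ 0) (h₂ : n (y₂, k₂, x) ≠ 0) : y₂ = y₁ := by
  have hfin := finite_support_inter_preimage_of_mem_Steinberg hn.1 injOn_fst_ZZ y₁
  obtain ⟨L, hL⟩ := x.exists_take_isolating (hfin.image fun g => g.2.2)
  obtain ⟨d, hd, hdZ⟩ := exists_mem_Diag_indicator_Zset (R := R) (x.take L)
  obtain ⟨K₁, hK₁⟩ := exists_finset_support_coeff_of_mem_Steinberg hn.1 y₁ x
  obtain ⟨K₂, hK₂⟩ := exists_finset_support_coeff_of_mem_Steinberg hn.1 y₂ x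
  obtain ⟨t, ht⟩ := exists_sum_mul_sub_ne_zero (fun k => n (y₁, k, x))
    (fun k => star (n (y₂, k, x))) K₁ K₂ hK₁ (fun k hk => hK₂ (by simpa using hk))
    (fun h => h₁ (congrFun h k₁)) (fun h => h₂ (by simpa using congrFun h k₂))
  have hval : conv (conv n d) (starf n) (y₁, t, y₂) =
      ∑ k ∈ K₁, n (y₁, k, x) * star (n (y₂, k - t, x)) := by
    rw [conv_apply_eq_sum K₁ fun y' k hnd _ => ?_]
    · refine Finset.sum_congr rfl fun k _ => ?_
      rw [conv_apply_of_mem_Diag _ hd, hdZ, Set.indicator_of_mem (x.mem_Zset_take L), Pi.one_apply,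
        mul_one, starf, ginv, neg_sub]
    rw [conv_apply_of_mem_Diag _ hd, hdZ] at hnd
    obtain rfl : y' = x := hL y' ⟨_, ⟨left_ne_zero_of_mul hnd, rfl⟩, rfl⟩
      (Set.mem_of_indicator_ne_zero (right_ne_zero_of_mul hnd))
    exact ⟨rfl, hK₁ (left_ne_zero_of_mul hnd)⟩
  exact congrArg (fun g => g.2.2) (eq_unit_of_mem_Diag (hn.2 d hd).1 (hval ▸ ht))

theorem IsNormalizer.suppMapsTo_alphaFun (hn : IsNormalizer n) (x : InfPath G) :
    SuppMapsTo n x (alphaFun n x) := fun _ _ h =>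
  have ⟨_, h'⟩ := exists_apply_alphaFun_ne_zero ⟨_, h, rfl⟩
  hn.fst_eq_of_snd_eq_s8 h' h

theorem IsNormalizer.conv_starf_self_apply_eq_zero (hn : IsNormalizer n) (x : InfPath G)
    {s : ℤ} (hs : s ≠ 0) : conv (starf n) n (x, s, x) = 0 := by
  obtain ⟨y, hny⟩ : ∃ y, SuppMapsTo n x y := ⟨_, hn.suppMapsTo_alphaFun x⟩
  obtain ⟨K, hK⟩ := exists_finset_support_coeff_of_mem_Steinberg hn.1 y x
  obtain ⟨d, hd, hdZ⟩ := exists_mem_Diag_indicator_Zset (R := R) (y.take 0)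
  have hdiag : ∀ j, conv (starf n) d (x, j, y) = starf n (x, j, y) := fun j => by
    rw [conv_apply_of_mem_Diag _ hd, hdZ, Set.indicator_of_mem (y.mem_Zset_take 0), Pi.one_apply,
      mul_one]
  have hJ : (support fun j => starf n (x, j, y)) ⊆ ↑(-K) :=
    fun j hj => Finset.mem_neg'.2 (hK (by simpa [starf, ginv] using hj))
  calc conv (starf n) n (x, s, x) = conv (conv (starf n) d) n (x, s, x) := by
        rw [conv_apply_of_suppMapsTo hny hJ, conv_apply_of_suppMapsTo hny (by simpa only [hdiag])]
        simp only [hdiag]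
    _ = 0 := by
        by_contra h
        exact hs (congrArg (fun g => g.2.1) (eq_unit_of_mem_Diag (hn.2 d hd).2 h))

theorem IsNormalizer.conv_starf_self_unit_conv {m : GTrip G → R} (hm : IsNormalizer m)
    (hn : IsNormalizer n) (x : InfPath G) :
    conv (starf (conv m n)) (conv m n) (unit x) =
      conv (starf m) m (unit (alphaFun n x)) * conv (starf n) n (unit x) := by
  have hny := hn.suppMapsTo_alphaFun x
  generalize alphaFun n x = y at hny ⊢
  have hmz := hm.suppMapsTo_alphaFun y
  generalize alphaFun m y = z at hmz
  obtain ⟨K, hK⟩ := exists_finset_support_coeff_of_mem_Steinberg hn.1 y x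
  obtain ⟨J, hJ⟩ := exists_finset_support_coeff_of_mem_Steinberg hm.1 z y
  rw [conv_starf_self_unit (hmz.conv hny) (support_conv_subset_add hny hJ hK),
    conv_starf_self_unit hmz hJ, conv_starf_self_unit hny hK]
  simp only [conv_apply_of_suppMapsTo hny hJ]
  refine sum_star_convolution_mul_self (fun j => m (z, j, y)) (fun k => n (y, k, x)) J K hK
    fun s hs => ?_
  rw [← conv_starf_self_apply hny hK, hn.conv_starf_self_apply_eq_zero x hs]

end Normalizer

end LPA

open LPA in
theorem alpha_comp_general {G : DirGraph}
    {R : Type} [CommRing R] [IsDomain R] [StarRing R]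
    (m n : GTrip G → R) (hm : IsNormalizer m) (hn : IsNormalizer n) (x : InfPath G) :
    (x ∈ domSet (conv m n) ↔ x ∈ domSet n ∧ alphaFun n x ∈ domSet m) ∧
      (x ∈ domSet (conv m n) → alphaFun m (alphaFun n x) = alphaFun (conv m n) x) := by
  refine ⟨by simp only [domSet, Set.mem_ofPred_eq, hm.conv_starf_self_unit_conv hn x,
    mul_ne_zero_iff, and_comm], fun hx => ?_⟩
  have hmn := (hm.suppMapsTo_alphaFun (alphaFun n x)).conv (hn.suppMapsTo_alphaFun x)
  exact (alphaFun_eq_of_suppMapsTo hmn (exists_of_mem_domSet hx)).symm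

open LPA in
/-- `x ∈ dom(mn)` iff `x ∈ dom(n)` and `α_n(x) ∈ dom(m)`; in that case
`α_m(α_n(x)) = α_{mn}(x)`. -/
theorem alpha_comp {G : DirGraph} (hrf : RowFinite G) (hns : NoSources G)
    {R : Type} [CommRing R] [IsDomain R] [StarRing R]
    (m n : GTrip G → R) (hm : IsNormalizer m) (hn : IsNormalizer n) (x : InfPath G) :
    (x ∈ domSet (conv m n) ↔ x ∈ domSet n ∧ alphaFun n x ∈ domSet m) ∧
      (x ∈ domSet (conv m n) → alphaFun m (alphaFun n x) = alphaFun (conv m n) x) :=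
  alpha_comp_general m n hm hn x
end
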